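/- arXiv:1006.3823 — 3 statements merged into one kernel-verified Lean document; each statement's English description precedes it below -/
import Mathlib

section
/- Let m ≥ 1 and let λ_1 > λ_2 > ⋯ > λ_m ≥ 1 be integers (a partition with distinct parts). Then, as an identity of rational numbers, ∑_{i=1}^m λ_i²(λ_i−1) ∏_{j≠i} ((λ_i−λ_j−1)(λ_i+λ_j)) / ((λ_i−λ_j)(λ_i+λ_j−1)) = ∑_{i=1}^m λ_i²(λ_i−1) − ∑_{i≠j} λ_i λ_j, where the last sum is over ordered pairs (i,j) with i ≠ j. (All denominators are nonzero: the λ_i are pairwise distinct and λ_i+λ_j ≥ 3 for i ≠ j.) -/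
/-!
Put `μᵢ = λᵢ² - λᵢ` and `τᵢ = λᵢ² + λᵢ`. Then `(λᵢ - λⱼ - 1)(λᵢ + λⱼ) = μᵢ - τⱼ`,
`(λᵢ - λⱼ)(λᵢ + λⱼ - 1) = μᵢ - μⱼ` and `μᵢ - τᵢ = -2λᵢ`, so `-2` times the left-hand side is the
divided difference `∑ᵢ f(μᵢ) / ∏_{j≠i} (μᵢ - μⱼ)` of `f = z ∏ⱼ (z - τⱼ)` at the nodes `μᵢ`.
Subtracting `z ∏ⱼ (z - μⱼ)`, which vanishes at the nodes, leaves a polynomial of degree `≤ m`,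
whose divided difference Lagrange interpolation reads off from its two top coefficients.
These are elementary symmetric functions of `μ` and `τ`, and they collapse to
`-2 (∑ λᵢ³ - (∑ λᵢ)²)`, which is `-2` times the right-hand side since
`∑_{i≠j} λᵢλⱼ = (∑ λᵢ)² - ∑ λᵢ²`.
-/

open Finset Polynomial Lagrange

theorem Polynomial.two_mul_X_mul_prod_X_sub_C_coeff_card_pred {R ι : Type*} [CommRing R]
    {s : Finset ι} (hs : s.Nonempty) (r : ι → R) :
    2 * (X * ∏ i ∈ s, (X - C (r i))).coeff (#s - 1) =
      (∑ i ∈ s, r i) ^ 2 - ∑ i ∈ s, r i ^ 2 := by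
  induction hs using Finset.Nonempty.cons_induction with
  | singleton a => simp [mul_coeff_zero]
  | cons a t ha ht ih =>
    obtain ⟨k, hk⟩ : ∃ k, #t = k + 1 := Nat.exists_eq_add_one.mpr ht.card_pos
    have htop : (X * ∏ i ∈ t, (X - C (r i))).coeff (k + 1) = -∑ i ∈ t, r i := by
      rw [coeff_X_mul, ← Nat.add_sub_cancel k 1, ← hk]
      exact prod_X_sub_C_coeff_card_pred t r ht.card_pos
    rw [hk, Nat.add_sub_cancel] at ih
    rw [prod_cons, sum_cons, sum_cons, card_cons, hk, Nat.add_sub_cancel,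
      mul_left_comm, sub_mul, coeff_sub, coeff_X_mul, coeff_C_mul]
    linear_combination ih - 2 * r a * htop

theorem Lagrange.sum_eval_div_prod_sub_of_natDegree_le {F ι : Type*} [Field F] [DecidableEq ι]
    {s : Finset ι} {v : ι → F} (hs : s.Nonempty) (hvs : Set.InjOn v s) {p : F[X]}
    (hp : p.natDegree ≤ #s) :
    ∑ i ∈ s, p.eval (v i) / ∏ j ∈ s.erase i, (v i - v j) =
      p.coeff (#s - 1) + p.coeff #s * ∑ i ∈ s, v i := by
  set q := p - C (p.coeff #s) * nodal s v
  have hq : q.degree < #s := by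
    refine (degree_lt_iff_coeff_zero _ _).mpr fun k hk => ?_
    rcases hk.eq_or_lt with rfl | hk
    · rw [coeff_sub, coeff_C_mul, ← natDegree_nodal (v := v), nodal_monic.coeff_natDegree,
        natDegree_nodal, mul_one, sub_self]
    · have hnodal : (nodal s v).coeff k = 0 :=
        coeff_eq_zero_of_natDegree_lt (by rwa [natDegree_nodal])
      rw [coeff_sub, coeff_C_mul, hnodal, coeff_eq_zero_of_natDegree_lt (hp.trans_lt hk),
        mul_zero, sub_zero]
  have hqv : ∀ i ∈ s, q.eval (v i) = p.eval (v i) := fun i hi => by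
    simp [q, eval_nodal_at_node hi]
  rw [← sum_congr rfl fun i hi => congrArg (· / _) (hqv i hi), ← coeff_eq_sum hvs hq,
    coeff_sub, coeff_C_mul, nodal_eq, prod_X_sub_C_coeff_card_pred s v hs.card_pos]
  ring

theorem two_mul_sum_mul_prod_sub_div_prod_sub {F ι : Type*} [Field F] [DecidableEq ι]
    {s : Finset ι} (hs : s.Nonempty) {μ : ι → F} (hμ : Set.InjOn μ s) (τ : ι → F) :
    2 * ∑ i ∈ s, μ i * (∏ j ∈ s, (μ i - τ j)) / ∏ j ∈ s.erase i, (μ i - μ j) =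
      (∑ i ∈ s, μ i - ∑ i ∈ s, τ i) ^ 2 + ∑ i ∈ s, μ i ^ 2 - ∑ i ∈ s, τ i ^ 2 := by
  obtain ⟨k, hk⟩ : ∃ k, #s = k + 1 := Nat.exists_eq_add_one.mpr hs.card_pos
  set D := nodal s τ - nodal s μ
  have hD : D.natDegree < #s := by
    have hlt : D.degree < #s := by
      simpa [degree_nodal] using degree_sub_lt_left (degree_nodal.trans degree_nodal.symm)
        (nodal_ne_zero (s := s) (v := τ))
        (nodal_monic.leadingCoeff.trans nodal_monic.leadingCoeff.symm)
    rcases eq_or_ne D 0 with h | h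
    · simp [h, hs.card_pos]
    · exact (natDegree_lt_iff_degree_lt h).mpr hlt
  have hXD : (X * D).natDegree ≤ #s :=
    natDegree_mul_le.trans (by rw [natDegree_X]; omega)
  have heval : ∀ i ∈ s, (X * D).eval (μ i) = μ i * ∏ j ∈ s, (μ i - τ j) := fun i hi => by
    simp [D, eval_nodal_at_node hi, eval_nodal]
  have htop : (X * D).coeff #s = ∑ i ∈ s, μ i - ∑ i ∈ s, τ i := by
    rw [hk, coeff_X_mul, ← Nat.add_sub_cancel k 1, ← hk, coeff_sub, nodal_eq, nodal_eq,
      prod_X_sub_C_coeff_card_pred s τ hs.card_pos, prod_X_sub_C_coeff_card_pred s μ hs.card_pos]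
    ring
  rw [← sum_congr rfl fun i hi => congrArg (· / _) (heval i hi),
    sum_eval_div_prod_sub_of_natDegree_le hs hμ hXD, htop, mul_sub, coeff_sub,
    nodal_eq, nodal_eq]
  linear_combination two_mul_X_mul_prod_X_sub_C_coeff_card_pred hs τ -
    two_mul_X_mul_prod_X_sub_C_coeff_card_pred hs μ

theorem sum_sum_erase_mul_eq {R ι : Type*} [CommRing R] [DecidableEq ι] (s : Finset ι)
    (x : ι → R) :
    ∑ i ∈ s, ∑ j ∈ s.erase i, x i * x j = (∑ i ∈ s, x i) ^ 2 - ∑ i ∈ s, x i ^ 2 := by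
  have hrow (i) (hi : i ∈ s) : ∑ j ∈ s.erase i, x i * x j = x i * ∑ j ∈ s, x j - x i ^ 2 := by
    rw [← mul_sum, sum_erase_eq_sub hi, mul_sub, sq]
  rw [sum_congr rfl hrow, sum_sub_distrib, ← sum_mul, sq]

theorem sum_sq_mul_sub_one_mul_prod_div_eq {F ι : Type*} [Field F] [CharZero F] [DecidableEq ι]
    {s : Finset ι} (hs : s.Nonempty) {x : ι → F} (hinj : Set.InjOn x s)
    (hsum : ∀ i ∈ s, ∀ j ∈ s, i ≠ j → x i + x j ≠ 1) :
    ∑ i ∈ s, (x i ^ 2 * (x i - 1)) *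
        ∏ j ∈ s.erase i, ((x i - x j - 1) * (x i + x j)) / ((x i - x j) * (x i + x j - 1))
      = ∑ i ∈ s, x i ^ 2 * (x i - 1) - ∑ i ∈ s, ∑ j ∈ s.erase i, x i * x j := by
  set μ : ι → F := fun i => x i ^ 2 - x i
  set τ : ι → F := fun i => x i ^ 2 + x i
  have hμτ (i j : ι) : μ i - τ j = (x i - x j - 1) * (x i + x j) := by simp only [μ, τ]; ring
  have hμμ (i j : ι) : μ i - μ j = (x i - x j) * (x i + x j - 1) := by simp only [μ]; ring
  have hμ : Set.InjOn μ s := fun i hi j hj hij => by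
    by_contra hne
    rcases mul_eq_zero.mp ((hμμ i j).symm.trans (sub_eq_zero.mpr hij)) with h | h
    exacts [hne (hinj hi hj (sub_eq_zero.mp h)), hsum i hi j hj hne (by linear_combination h)]
  have hterm : ∀ i ∈ s, μ i * (∏ j ∈ s, (μ i - τ j)) / ∏ j ∈ s.erase i, (μ i - μ j) =
      -2 * ((x i ^ 2 * (x i - 1)) * ∏ j ∈ s.erase i,
        ((x i - x j - 1) * (x i + x j)) / ((x i - x j) * (x i + x j - 1))) := by
    intro i hi
    rw [← mul_prod_erase s _ hi, prod_div_distrib]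
    simp only [hμτ, hμμ, μ]
    ring
  have hlin : ∑ i ∈ s, μ i - ∑ i ∈ s, τ i = -2 * ∑ i ∈ s, x i := by
    rw [← sum_sub_distrib, mul_sum]
    exact sum_congr rfl fun i _ => by simp only [μ, τ]; ring
  have hquad : ∑ i ∈ s, μ i ^ 2 - ∑ i ∈ s, τ i ^ 2 = -4 * ∑ i ∈ s, x i ^ 3 := by
    rw [← sum_sub_distrib, mul_sum]
    exact sum_congr rfl fun i _ => by simp only [μ, τ]; ring
  have hcube : ∑ i ∈ s, x i ^ 2 * (x i - 1) = ∑ i ∈ s, x i ^ 3 - ∑ i ∈ s, x i ^ 2 := by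
    rw [← sum_sub_distrib]
    exact sum_congr rfl fun i _ => by ring
  have key := two_mul_sum_mul_prod_sub_div_prod_sub hs hμ τ
  rw [sum_congr rfl hterm, ← mul_sum, add_sub_assoc, hlin, hquad] at key
  rw [sum_sum_erase_mul_eq, hcube]
  linear_combination (-1 / 4 : F) * key

/-- Identity (3.14) in the paper: for a partition `λ₁ > λ₂ > ⋯ > λₘ ≥ 1` with distinct parts,
`∑ᵢ λᵢ²(λᵢ−1) ∏_{j≠i} ((λᵢ−λⱼ−1)(λᵢ+λⱼ))/((λᵢ−λⱼ)(λᵢ+λⱼ−1))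
  = ∑ᵢ λᵢ²(λᵢ−1) − ∑_{i≠j} λᵢλⱼ`. -/
theorem stmt_0 (m : ℕ) (hm : 1 ≤ m) (lam : Fin m → ℤ)
    (hdec : ∀ i j : Fin m, i < j → lam j < lam i)
    (hpos : ∀ i : Fin m, 1 ≤ lam i) :
    ∑ i : Fin m, ((lam i : ℚ) ^ 2 * ((lam i : ℚ) - 1)) *
        ∏ j ∈ Finset.univ.erase i,
          (((lam i : ℚ) - (lam j : ℚ) - 1) * ((lam i : ℚ) + (lam j : ℚ))) /
            (((lam i : ℚ) - (lam j : ℚ)) * ((lam i : ℚ) + (lam j : ℚ) - 1))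
      = ∑ i : Fin m, (lam i : ℚ) ^ 2 * ((lam i : ℚ) - 1) -
          ∑ i : Fin m, ∑ j ∈ Finset.univ.erase i, (lam i : ℚ) * (lam j : ℚ) := by
  have hanti : StrictAnti lam := hdec
  refine sum_sq_mul_sub_one_mul_prod_div_eq (univ_nonempty_iff.mpr ⟨⟨0, hm⟩⟩)
    (Int.cast_injective.comp hanti.injective).injOn fun i _ j _ _ => ?_
  have := hpos i
  have := hpos j
  exact_mod_cast (by omega : lam i + lam j ≠ 1)
end

section
/- Let m ≥ 1 and let λ_1 > λ_2 > ⋯ > λ_m ≥ 1 be integers (a partition with distinct parts). For each i set A_i = 2λ_i ∏_{j≠i} ((λ_i−λ_j−1)(λ_i+λ_j)) / ((λ_i−λ_j)(λ_i+λ_j−1)). Then for every real number x with x ≠ λ_i and x ≠ 1−λ_i for all i, one has the partial fraction identity (x²−x) ∏_{i=1}^m ((x−λ_i−1)(x+λ_i)) / ((x−λ_i)(x+λ_i−1)) = (x²−x) − ∑_{i=1}^m A_i − ∑_{i=1}^m A_i λ_i(λ_i−1) / ((x−λ_i)(x+λ_i−1)). -/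
open Finset Polynomial

/-!
With `t = x² - x`, `μᵢ = λᵢ(λᵢ - 1)` and `νᵢ = λᵢ(λᵢ + 1)` the factors become
`(x - λᵢ - 1)(x + λᵢ) = t - νᵢ` and `(x - λᵢ)(x + λᵢ - 1) = t - μᵢ`, so the left side is
`t ∏ᵢ (t - νᵢ)/(t - μᵢ)`. Since `∏ᵢ (t - νᵢ) - ∏ᵢ (t - μᵢ)` has degree `< m`, Lagrange
interpolation at the distinct nodes `μᵢ` gives the partial fraction expansion
`∏ᵢ (t - νᵢ)/(t - μᵢ) = 1 + ∑ᵢ cᵢ/(t - μᵢ)`, whose residues `cᵢ` turn out to be `-Aᵢ`.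
Finally `t/(t - μᵢ) = 1 + μᵢ/(t - μᵢ)`.
-/

namespace Lagrange

theorem degree_nodal_sub_nodal_lt {R ι : Type*} [CommRing R] [Nontrivial R] (s : Finset ι)
    (μ ν : ι → R) : (nodal s ν - nodal s μ).degree < #s := by
  rw [← degree_nodal (v := ν)]
  exact degree_sub_lt_left (by rw [degree_nodal, degree_nodal]) nodal_ne_zero
    (by rw [nodal_monic.leadingCoeff, nodal_monic.leadingCoeff])

theorem prod_div_sub_eq_one_add_sum {F ι : Type*} [Field F] [DecidableEq ι] {s : Finset ι}
    {μ : ι → F} (ν : ι → F) {x : F} (hμ : Set.InjOn μ s) (hx : ∀ i ∈ s, x ≠ μ i) :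
    ∏ i ∈ s, (x - ν i) / (x - μ i) =
      1 + ∑ i ∈ s, nodalWeight s μ i * (∏ j ∈ s, (μ i - ν j)) / (x - μ i) := by
  set f := nodal s ν - nodal s μ
  have hf := congrArg (eval x) (eq_interpolate hμ (degree_nodal_sub_nodal_lt s μ ν))
  have hvalues : ∀ i ∈ s, eval (μ i) f = ∏ j ∈ s, (μ i - ν j) := fun i hi => by
    rw [eval_sub, eval_nodal_at_node hi, sub_zero, eval_nodal]
  rw [eval_interpolate_not_at_node _ hx, sum_congr rfl fun i hi => by rw [hvalues i hi],
    eval_sub, sub_eq_iff_eq_add', eval_nodal, eval_nodal] at hf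
  have hD : ∏ i ∈ s, (x - μ i) ≠ 0 := prod_ne_zero_iff.mpr fun i hi => sub_ne_zero.mpr (hx i hi)
  rw [prod_div_distrib, hf, add_div, div_self hD, mul_div_cancel_left₀ _ hD]
  congr 1
  exact sum_congr rfl fun i _ => by ring

end Lagrange

theorem strictMonoOn_mul_sub_one : StrictMonoOn (fun a : ℝ => a * (a - 1)) (Set.Ici (1 / 2)) :=
  fun a ha b hb hab => by
    simp only [Set.mem_Ici] at ha hb
    nlinarith

theorem Function.Injective.mul_sub_one_of_one_le {ι : Type*} {lam : ι → ℤ}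
    (hinj : Function.Injective lam) (hpos : ∀ i, 1 ≤ lam i) :
    Function.Injective fun i => (lam i : ℝ) * (lam i - 1) := fun i j hij => by
  have hlam : ∀ k, (lam k : ℝ) ∈ Set.Ici (1 / 2) := fun k => by
    have : (1 : ℝ) ≤ lam k := by exact_mod_cast hpos k
    simp only [Set.mem_Ici]; linarith
  exact hinj <| Int.cast_injective (strictMonoOn_mul_sub_one.injOn (hlam i) (hlam j) hij)

theorem nodalWeight_mul_prod_sub_mul_add_one {ι : Type*} [Fintype ι] [DecidableEq ι]
    (lam : ι → ℝ) (i : ι) :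
    Lagrange.nodalWeight univ (fun j => lam j * (lam j - 1)) i *
        ∏ j, (lam i * (lam i - 1) - lam j * (lam j + 1)) =
      -(2 * lam i * ∏ j ∈ univ.erase i,
        (lam i - lam j - 1) * (lam i + lam j) / ((lam i - lam j) * (lam i + lam j - 1))) := by
  have hfactor : ∀ j, (lam i * (lam i - 1) - lam j * (lam j - 1))⁻¹ *
      (lam i * (lam i - 1) - lam j * (lam j + 1)) =
        (lam i - lam j - 1) * (lam i + lam j) / ((lam i - lam j) * (lam i + lam j - 1)) :=
    fun j => by ring
  rw [Lagrange.nodalWeight, ← mul_prod_erase univ _ (mem_univ i), mul_left_comm,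
    ← prod_mul_distrib, prod_congr rfl fun j _ => hfactor j]
  ring

theorem stmt_1_general (m : ℕ) (lam : Fin m → ℤ)
    (hdec : ∀ i j : Fin m, i < j → lam j < lam i)
    (hpos : ∀ i : Fin m, 1 ≤ lam i)
    (A : Fin m → ℝ)
    (hA : ∀ i : Fin m, A i = 2 * (lam i : ℝ) *
        ∏ j ∈ Finset.univ.erase i,
          (((lam i : ℝ) - (lam j : ℝ) - 1) * ((lam i : ℝ) + (lam j : ℝ))) /
            (((lam i : ℝ) - (lam j : ℝ)) * ((lam i : ℝ) + (lam j : ℝ) - 1)))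
    (x : ℝ) (hx1 : ∀ i : Fin m, x ≠ (lam i : ℝ)) (hx2 : ∀ i : Fin m, x ≠ 1 - (lam i : ℝ)) :
    (x ^ 2 - x) * ∏ i : Fin m,
        ((x - (lam i : ℝ) - 1) * (x + (lam i : ℝ))) /
          ((x - (lam i : ℝ)) * (x + (lam i : ℝ) - 1))
      = (x ^ 2 - x) - ∑ i : Fin m, A i -
          ∑ i : Fin m, A i * (lam i : ℝ) * ((lam i : ℝ) - 1) /
            ((x - (lam i : ℝ)) * (x + (lam i : ℝ) - 1)) := by
  set t := x ^ 2 - x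
  let μ : Fin m → ℝ := fun i => lam i * (lam i - 1)
  let ν : Fin m → ℝ := fun i => lam i * (lam i + 1)
  have hpole : ∀ i, (x - lam i) * (x + lam i - 1) = t - μ i := fun i => by ring
  have hμ : Function.Injective μ := (StrictAnti.injective hdec).mul_sub_one_of_one_le hpos
  have ht : ∀ i ∈ univ, t ≠ μ i := fun i _ => by
    rw [← sub_ne_zero, ← hpole]
    exact mul_ne_zero (sub_ne_zero.mpr (hx1 i)) fun h => hx2 i (by linarith)
  have hresidue : ∀ i, Lagrange.nodalWeight univ μ i * ∏ j, (μ i - ν j) = -A i := fun i => by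
    rw [hA]
    exact nodalWeight_mul_prod_sub_mul_add_one (fun j => (lam j : ℝ)) i
  have hterm : ∀ i, t * (-A i / (t - μ i)) =
      -A i - A i * lam i * (lam i - 1) / ((x - lam i) * (x + lam i - 1)) := fun i => by
    rw [hpole]
    field_simp [sub_ne_zero.mpr (ht i (mem_univ i))]
    ring
  calc t * ∏ i, (x - lam i - 1) * (x + lam i) / ((x - lam i) * (x + lam i - 1))
      = t * ∏ i, (t - ν i) / (t - μ i) :=
        congrArg _ (prod_congr rfl fun i _ => by rw [hpole]; ring)
    _ = t * (1 + ∑ i, -A i / (t - μ i)) := by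
        rw [Lagrange.prod_div_sub_eq_one_add_sum ν hμ.injOn ht]
        simp only [hresidue]
    _ = _ := by
        rw [mul_add, mul_one, mul_sum, sum_congr rfl fun i _ => hterm i, sum_sub_distrib,
          sum_neg_distrib]
        ring

/-- The partial fraction identity (3.15)-(3.16) in the paper: with
`Aᵢ = 2λᵢ ∏_{j≠i} ((λᵢ−λⱼ−1)(λᵢ+λⱼ))/((λᵢ−λⱼ)(λᵢ+λⱼ−1))`, for real `x` avoiding the poles,
`(x²−x) ∏ᵢ ((x−λᵢ−1)(x+λᵢ))/((x−λᵢ)(x+λᵢ−1))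
  = (x²−x) − ∑ᵢ Aᵢ − ∑ᵢ Aᵢ λᵢ(λᵢ−1)/((x−λᵢ)(x+λᵢ−1))`. -/
theorem stmt_1 (m : ℕ) (hm : 1 ≤ m) (lam : Fin m → ℤ)
    (hdec : ∀ i j : Fin m, i < j → lam j < lam i)
    (hpos : ∀ i : Fin m, 1 ≤ lam i)
    (A : Fin m → ℝ)
    (hA : ∀ i : Fin m, A i = 2 * (lam i : ℝ) *
        ∏ j ∈ Finset.univ.erase i,
          (((lam i : ℝ) - (lam j : ℝ) - 1) * ((lam i : ℝ) + (lam j : ℝ))) /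
            (((lam i : ℝ) - (lam j : ℝ)) * ((lam i : ℝ) + (lam j : ℝ) - 1)))
    (x : ℝ) (hx1 : ∀ i : Fin m, x ≠ (lam i : ℝ)) (hx2 : ∀ i : Fin m, x ≠ 1 - (lam i : ℝ)) :
    (x ^ 2 - x) * ∏ i : Fin m,
        ((x - (lam i : ℝ) - 1) * (x + (lam i : ℝ))) /
          ((x - (lam i : ℝ)) * (x + (lam i : ℝ) - 1))
      = (x ^ 2 - x) - ∑ i : Fin m, A i -
          ∑ i : Fin m, A i * (lam i : ℝ) * ((lam i : ℝ) - 1) /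
            ((x - (lam i : ℝ)) * (x + (lam i : ℝ) - 1)) :=
  stmt_1_general m lam hdec hpos A hA x hx1 hx2
end

section
/- Let V be a finite-dimensional real inner product space, R ⊂ V∖{0} a finite reduced crystallographic root system spanning V, R⁺ a positive system for R, c : R → ℝ a Weyl-group–invariant function, and C(V) the Clifford algebra of V with relations v·w + w·v = −2⟨v,w⟩; set f_α = α/|α| ∈ C(V) for α ∈ R. Define the Casimir element Ω_c = ∑_{(α,β) ∈ R⁺×R⁺, s_α(β) ∈ −R⁺} c(α)c(β) |α̌||β̌| f_α f_β ∈ C(V). Then Ω_c commutes with f_γ for every γ ∈ R; equivalently, Ω_c lies in the center of the group algebra of the subgroup of the unit group of C(V) generated by {f_α : α ∈ R} (the spin double cover W̃ of the Weyl group). -/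
/-! For fixed `α > 0`, the map `β ↦ -s_α β` is an involution of `{β > 0 : s_α β < 0}` that
preserves `|β|`, `|β̌|` and `c(β)` (as `-s_α β = s_α (s_β β)`). Since `β + (-s_α β)` is a multiple
of `α` and `f_α²` is a scalar, `f_α f_β + f_α f_{-s_α β}` is central, so the paired terms of
`Ω_c y - y Ω_c` cancel for every `y`; a term paired with itself equals its own negative and
vanishes. -/

open Finset RealInnerProductSpace CliffordAlgebra

theorem Finset.sum_eq_zero_of_involution_neg {ι M : Type*} [AddCommGroup M] [IsAddTorsionFree M]
    {s : Finset ι} {f : ι → M} (g : ι → ι) (hg_mem : ∀ a ∈ s, g a ∈ s)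
    (hg_invol : ∀ a ∈ s, g (g a) = a) (hf : ∀ a ∈ s, f (g a) = -f a) :
    ∑ a ∈ s, f a = 0 :=
  sum_involution (fun a _ => g a) (fun a ha => by rw [hf a ha, add_neg_cancel])
    (fun a ha hfa hfix => hfa (self_eq_neg.mp (by simpa only [hfix] using hf a ha))) hg_mem hg_invol

namespace CliffordAlgebra

variable {R M : Type*} [CommRing R] [AddCommGroup M] [Module R M] {Q : QuadraticForm R M}

theorem ι_mul_ι_commutator_eq_neg_of_add_mem_span {a b b' : M} (h : b + b' ∈ R ∙ a)
    (y : CliffordAlgebra Q) :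
    ι Q a * ι Q b' * y - y * (ι Q a * ι Q b') = -(ι Q a * ι Q b * y - y * (ι Q a * ι Q b)) := by
  obtain ⟨r, hr⟩ := Submodule.mem_span_singleton.mp h
  have hb' : ι Q a * ι Q b' = algebraMap R _ (r * Q a) - ι Q a * ι Q b := by
    rw [eq_sub_of_add_eq' hr.symm, map_sub, map_smul, mul_sub, mul_smul_comm, ι_sq_scalar,
      map_mul, Algebra.smul_def]
  rw [hb', sub_mul, mul_sub, Algebra.commutes]
  abel

end CliffordAlgebra

section RootReflection

variable {V : Type*} [NormedAddCommGroup V] [InnerProductSpace ℝ V]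

noncomputable def rootReflection (α v : V) : V := v - (2 * ⟪v, α⟫ / ⟪α, α⟫) • α

theorem rootReflection_neg (α v : V) : rootReflection α (-v) = -rootReflection α v := by
  simp only [rootReflection, inner_neg_left, mul_neg, neg_div, neg_smul, sub_neg_eq_add, neg_sub]
  abel

theorem rootReflection_self {α : V} (hα : α ≠ 0) : rootReflection α α = -α := by
  rw [rootReflection, mul_div_assoc, div_self (inner_self_ne_zero.mpr hα)]
  module

theorem rootReflection_rootReflection (α v : V) : rootReflection α (rootReflection α v) = v := by
  rcases eq_or_ne α 0 with rfl | hα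
  · simp [rootReflection]
  have hαα : ⟪α, α⟫ ≠ 0 := inner_self_ne_zero.mpr hα
  simp only [rootReflection, inner_sub_left, real_inner_smul_left]
  match_scalars
  · ring
  · field_simp
    ring

theorem norm_rootReflection (α v : V) : ‖rootReflection α v‖ = ‖v‖ := by
  rcases eq_or_ne α 0 with rfl | hα
  · simp [rootReflection]
  have hαα : ⟪α, α⟫ ≠ 0 := inner_self_ne_zero.mpr hα
  rw [← sq_eq_sq₀ (norm_nonneg _) (norm_nonneg _), ← real_inner_self_eq_norm_sq,
    ← real_inner_self_eq_norm_sq]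
  simp only [rootReflection, inner_sub_left, inner_sub_right, real_inner_smul_left,
    real_inner_smul_right, real_inner_comm v α]
  field_simp
  ring

theorem norm_coroot (x : V) : ‖(2 / ⟪x, x⟫) • x‖ = 2 / ‖x‖ := by
  rcases eq_or_ne x 0 with rfl | hx
  · simp
  have hx' : ‖x‖ ≠ 0 := norm_ne_zero_iff.mpr hx
  rw [norm_smul, real_inner_self_eq_norm_sq, Real.norm_of_nonneg (by positivity)]
  field_simp

theorem norm_coroot_neg_rootReflection (α β : V) :
    ‖(2 / ⟪-rootReflection α β, -rootReflection α β⟫) • -rootReflection α β‖ =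
      ‖(2 / ⟪β, β⟫) • β‖ := by
  rw [norm_coroot, norm_coroot, norm_neg, norm_rootReflection]

theorem add_neg_rootReflection_mem_span (α v : V) : v + -rootReflection α v ∈ ℝ ∙ α := by
  rw [rootReflection, neg_sub, add_sub_cancel]
  exact Submodule.smul_mem _ _ (Submodule.mem_span_singleton_self α)

theorem neg_mem_of_rootReflection_mem {R : Set V} (hR0 : (0 : V) ∉ R)
    (hsR : ∀ α ∈ R, ∀ β ∈ R, rootReflection α β ∈ R) {β : V} (hβ : β ∈ R) : -β ∈ R := by
  rw [← rootReflection_self (ne_of_mem_of_not_mem hβ hR0)]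
  exact hsR β hβ β hβ

theorem apply_neg_rootReflection {X : Type*} {R : Set V} (hR0 : (0 : V) ∉ R)
    (hsR : ∀ α ∈ R, ∀ β ∈ R, rootReflection α β ∈ R) {c : V → X}
    (hc : ∀ α ∈ R, ∀ β ∈ R, c (rootReflection α β) = c β)
    {α β : V} (hα : α ∈ R) (hβ : β ∈ R) : c (-rootReflection α β) = c β := by
  have hβ' : -β ∈ R := neg_mem_of_rootReflection_mem hR0 hsR hβ
  rw [← rootReflection_neg, hc α hα _ hβ', ← rootReflection_self (ne_of_mem_of_not_mem hβ hR0),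
    hc β hβ β hβ]

theorem ι_unit_mul_ι_unit_neg_rootReflection_commutator {Q : QuadraticForm ℝ V} {α : V}
    (hα : α ≠ 0) (β : V) (y : CliffordAlgebra Q) :
    let fα := ι Q (‖α‖⁻¹ • α)
    let fβ' := ι Q (‖-rootReflection α β‖⁻¹ • -rootReflection α β)
    let fβ := ι Q (‖β‖⁻¹ • β)
    fα * fβ' * y - y * (fα * fβ') = -(fα * fβ * y - y * (fα * fβ)) := by
  refine CliffordAlgebra.ι_mul_ι_commutator_eq_neg_of_add_mem_span ?_ y
  rw [norm_neg, norm_rootReflection, ← smul_add,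
    Submodule.span_singleton_smul_eq (inv_ne_zero (norm_ne_zero_iff.mpr hα)).isUnit]
  exact Submodule.smul_mem _ _ (add_neg_rootReflection_mem_span α β)

end RootReflection

theorem stmt_3_general
    (V : Type*) [NormedAddCommGroup V] [InnerProductSpace ℝ V]
    [DecidableEq V]
    -- the root system
    (R : Finset V) (hR0 : (0 : V) ∉ R)
    -- the reflections
    (s : V → V → V)
    (hs : ∀ α v : V, s α v = v - (2 * ⟪v, α⟫ / ⟪α, α⟫) • α)
    (hsR : ∀ α ∈ R, ∀ β ∈ R, s α β ∈ R)
    -- a positive system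
    (Rp : Finset V) (t : V)
    (hRp : Rp = R.filter fun α => 0 < ⟪t, α⟫)
    -- a Weyl-group invariant parameter function
    (c : V → ℝ) (hc : ∀ α ∈ R, ∀ β ∈ R, c (s α β) = c β)
    -- the coroots
    (cv : V → V) (hcv : ∀ α : V, cv α = (2 / ⟪α, α⟫) • α)
    -- the Clifford algebra of (V, -⟨·,·⟩) and the elements f_α = α/|α|
    (Q : QuadraticForm ℝ V)
    (f : V → CliffordAlgebra Q) (hf : ∀ α : V, f α = CliffordAlgebra.ι Q (‖α‖⁻¹ • α))
    -- the Casimir element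
    (Ω : CliffordAlgebra Q)
    (hΩ : Ω = ∑ p ∈ (Rp ×ˢ Rp).filter (fun p => -(s p.1 p.2) ∈ Rp),
        (c p.1 * c p.2 * (‖cv p.1‖ * ‖cv p.2‖)) • (f p.1 * f p.2)) :
    ∀ γ ∈ R, Ω * f γ = f γ * Ω := by
  obtain rfl : s = rootReflection := funext₂ hs
  obtain rfl : cv = fun α => (2 / ⟪α, α⟫) • α := funext hcv
  obtain rfl : f = fun α => ι Q (‖α‖⁻¹ • α) := funext hf
  have hRpR : Rp ⊆ R := hRp ▸ filter_subset _ _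
  have : IsAddTorsionFree (CliffordAlgebra Q) := .of_isTorsionFree ℝ _
  intro γ _
  rw [← sub_eq_zero, hΩ, sum_mul, mul_sum, ← sum_sub_distrib]
  refine sum_eq_zero_of_involution_neg (fun p => (p.1, -rootReflection p.1 p.2)) ?_ ?_ ?_
  · rintro ⟨α, β⟩ hp
    simp only [mem_filter, mem_product, rootReflection_neg, rootReflection_rootReflection,
      neg_neg] at hp ⊢
    exact ⟨⟨hp.1.1, hp.2⟩, hp.1.2⟩
  · rintro ⟨α, β⟩ -
    simp only [rootReflection_neg, rootReflection_rootReflection, neg_neg]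
  · rintro ⟨α, β⟩ hp
    obtain ⟨hα, hβ⟩ : α ∈ Rp ∧ β ∈ Rp := mem_product.mp (mem_filter.mp hp).1
    simp only [smul_mul_assoc, mul_smul_comm, ← smul_sub]
    rw [ι_unit_mul_ι_unit_neg_rootReflection_commutator (ne_of_mem_of_not_mem (hRpR hα) hR0),
      apply_neg_rootReflection hR0 hsR hc (hRpR hα) (hRpR hβ), norm_coroot_neg_rootReflection,
      smul_neg]

/-- The Casimir element `Ω_{W̃,c} = ∑_{α,β>0, s_α(β)<0} c(α)c(β)|α̌||β̌| f_α f_β` of the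
Clifford algebra commutes with each generator `f_γ = ι(γ/|γ|)`, `γ ∈ R`, of the spin cover
`W̃` of the Weyl group; i.e. it is central in `ℂ[W̃]`. -/
theorem stmt_3
    (V : Type*) [NormedAddCommGroup V] [InnerProductSpace ℝ V] [FiniteDimensional ℝ V]
    [DecidableEq V]
    -- the root system
    (R : Finset V) (hR0 : (0 : V) ∉ R)
    (hspan : Submodule.span ℝ (R : Set V) = ⊤)
    -- the reflections
    (s : V → V → V)
    (hs : ∀ α v : V, s α v = v - (2 * ⟪v, α⟫ / ⟪α, α⟫) • α)
    (hsR : ∀ α ∈ R, ∀ β ∈ R, s α β ∈ R)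
    -- crystallographic
    (hcrys : ∀ α ∈ R, ∀ β ∈ R, ∃ n : ℤ, 2 * ⟪β, α⟫ / ⟪α, α⟫ = (n : ℝ))
    -- reduced
    (hred : ∀ α ∈ R, ∀ t : ℝ, t • α ∈ R → t = 1 ∨ t = -1)
    -- a positive system
    (Rp : Finset V) (t : V) (ht : ∀ α ∈ R, ⟪t, α⟫ ≠ 0)
    (hRp : Rp = R.filter fun α => 0 < ⟪t, α⟫)
    -- a Weyl-group invariant parameter function
    (c : V → ℝ) (hc : ∀ α ∈ R, ∀ β ∈ R, c (s α β) = c β)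
    -- the coroots
    (cv : V → V) (hcv : ∀ α : V, cv α = (2 / ⟪α, α⟫) • α)
    -- the Clifford algebra of (V, -⟨·,·⟩) and the elements f_α = α/|α|
    (Q : QuadraticForm ℝ V) (hQ : ∀ v : V, Q v = -⟪v, v⟫)
    (f : V → CliffordAlgebra Q) (hf : ∀ α : V, f α = CliffordAlgebra.ι Q (‖α‖⁻¹ • α))
    -- the Casimir element
    (Ω : CliffordAlgebra Q)
    (hΩ : Ω = ∑ p ∈ (Rp ×ˢ Rp).filter (fun p => -(s p.1 p.2) ∈ Rp),
        (c p.1 * c p.2 * (‖cv p.1‖ * ‖cv p.2‖)) • (f p.1 * f p.2)) :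
    ∀ γ ∈ R, Ω * f γ = f γ * Ω :=
  stmt_3_general V R hR0 s hs hsR Rp t hRp c hc cv hcv Q f hf Ω hΩ
end
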